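/- Let n ≥ 2 be an integer and consider the n-set partition generated by D₁ = {(2^(n-1) − 1)·a(k) + k : k ≥ 1}, with D₂ = D₁ ± 2^(n-2) = {(2^(n-1) − 1)·a(k) + k − 2^(n-2) : k ≥ 1} ∪ {(2^(n-1) − 1)·a(k) + k + 2^(n-2) : k ≥ 1}. If the elements of D₂ are listed in increasing order d_{2,1} < d_{2,2} < d_{2,3} < ..., then for every positive integer k, d_{2,k} = a(k) + (2^(n-1) − 2)·k − (2^(n-2) − 1). -/

import Mathlib

noncomputable def φ : ℝ := (1 + Real.sqrt 5) / 2
noncomputable def a (n : ℕ) : ℤ := ⌊(n : ℝ) * φ⌋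

/-- The second column of the `n`-set partition generated by
`D₁ = {(2^(n-1) - 1)·a(k) + k : k ≥ 1}`. -/
noncomputable def D2 (n : ℕ) : Set ℤ :=
  {x | ∃ k : ℕ, 1 ≤ k ∧ x = ((2:ℤ) ^ (n-1) - 1) * a k + k - 2 ^ (n-2)} ∪
  {x | ∃ k : ℕ, 1 ≤ k ∧ x = ((2:ℤ) ^ (n-1) - 1) * a k + k + 2 ^ (n-2)}

/-! Write `H = 2 ^ (n - 2)`, `b k = a k + k = ⌊k φ²⌋` and `g k = a k + (2H - 2) k - (H - 1)`.
By Rayleigh's theorem `a` and `b` partition the positive integers, and `φ² = φ + 1` gives the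
Wythoff identities `a (a k) = b k - 1`, `a (b k) = a k + b k`, `a (b k + 1) = a k + b k + 1`.
Hence `g (a k) = (2H - 1) a k + k - H` and `g (b k) = (2H - 1) a (a k) + a k + H`, while the
remaining terms `(2H - 1) a (b k) + b k + H` of the second family equal `g (a (b k + 1))`.
So `g` is a strictly increasing enumeration of `D₂`, and such an enumeration is unique. -/

lemma φ_sq : φ ^ 2 = φ + 1 := Real.goldenRatio_sq

lemma one_lt_φ : 1 < φ := Real.one_lt_goldenRatio

lemma φ_lt_two : φ < 2 := Real.goldenRatio_lt_two

lemma irrational_φ : Irrational φ := Real.goldenRatio_irrational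

lemma natCast_mul_φ_nonneg (k : ℕ) : 0 ≤ (k : ℝ) * φ :=
  mul_nonneg k.cast_nonneg (zero_le_one.trans one_lt_φ.le)

lemma le_a (k : ℕ) : (k : ℤ) ≤ a k :=
  Int.le_floor.2 (by push_cast; nlinarith [one_lt_φ, k.cast_nonneg (α := ℝ)])

lemma a_lt_a_succ (k : ℕ) : a k < a (k + 1) := by
  rw [a, a, Int.lt_iff_add_one_le, ← Int.floor_add_one]
  exact Int.floor_mono (by push_cast; nlinarith [one_lt_φ])

lemma fract_mul_φ_pos {k : ℕ} (hk : 1 ≤ k) : 0 < Int.fract ((k : ℝ) * φ) :=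
  Int.fract_pos.2 ((irrational_φ.natCast_mul (by omega)).ne_int _)

lemma natCast_mul_φ_eq (k : ℕ) : (k : ℝ) * φ = a k + Int.fract ((k : ℝ) * φ) :=
  (Int.floor_add_fract _).symm

/-- The lower Wythoff sequence `a` with values in `ℕ`, so that it can be composed with itself. -/
noncomputable def aNat (k : ℕ) : ℕ := ⌊(k : ℝ) * φ⌋₊

noncomputable def bNat (k : ℕ) : ℕ := aNat k + k

lemma natCast_aNat (k : ℕ) : (aNat k : ℤ) = a k :=
  Int.natCast_floor_eq_floor (natCast_mul_φ_nonneg k)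

lemma cast_aNat (k : ℕ) : (aNat k : ℝ) = a k :=
  natCast_floor_eq_intCast_floor (natCast_mul_φ_nonneg k)

lemma natCast_bNat (k : ℕ) : (bNat k : ℤ) = a k + k := by
  rw [bNat, Nat.cast_add, natCast_aNat]

lemma one_le_aNat {k : ℕ} (hk : 1 ≤ k) : 1 ≤ aNat k := by
  have := le_a k
  have := natCast_aNat k
  omega

lemma aNat_mul_φ (k : ℕ) :
    (aNat k : ℝ) * φ = a k + k - (φ - 1) * Int.fract ((k : ℝ) * φ) := by
  rw [cast_aNat]
  linear_combination (k : ℝ) * φ_sq - (φ - 1) * natCast_mul_φ_eq k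

lemma bNat_mul_φ (k : ℕ) :
    (bNat k : ℝ) * φ = 2 * a k + k + (2 - φ) * Int.fract ((k : ℝ) * φ) := by
  rw [bNat, Nat.cast_add, add_mul, aNat_mul_φ]
  linear_combination natCast_mul_φ_eq k

lemma a_aNat {k : ℕ} (hk : 1 ≤ k) : a (aNat k) = a k + k - 1 := by
  have hθ := fract_mul_φ_pos hk
  have hθ' := Int.fract_lt_one ((k : ℝ) * φ)
  rw [a, Int.floor_eq_iff, aNat_mul_φ]
  push_cast
  constructor <;> nlinarith [one_lt_φ, φ_lt_two]

lemma a_bNat_add {k j : ℕ} (hk : 1 ≤ k) (hj : j ≤ 1) :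
    a (bNat k + j) = 2 * a k + k + j := by
  have hθ := fract_mul_φ_pos hk
  have hθ' := Int.fract_lt_one ((k : ℝ) * φ)
  have hj' : (j : ℝ) ≤ 1 := by exact_mod_cast hj
  rw [a, Int.floor_eq_iff, Nat.cast_add, add_mul, bNat_mul_φ]
  push_cast
  constructor <;> nlinarith [one_lt_φ, φ_lt_two, j.cast_nonneg (α := ℝ)]

lemma a_bNat {k : ℕ} (hk : 1 ≤ k) : a (bNat k) = 2 * a k + k := by
  simpa using a_bNat_add hk zero_le_one

lemma a_bNat_add_one {k : ℕ} (hk : 1 ≤ k) : a (bNat k + 1) = 2 * a k + k + 1 := by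
  exact_mod_cast a_bNat_add hk le_rfl

lemma holderConjugate_φ : φ.HolderConjugate (φ + 1) := by
  rw [Real.holderConjugate_iff]
  refine ⟨one_lt_φ, ?_⟩
  have := one_lt_φ
  field_simp
  linear_combination -φ_sq

lemma eq_aNat_or_eq_bNat {m : ℕ} (hm : 1 ≤ m) :
    (∃ k, 1 ≤ k ∧ m = aNat k) ∨ (∃ k, 1 ≤ k ∧ m = bNat k) := by
  have hmem : (m : ℤ) ∈ {n : ℤ | 0 < n} := by simp only [Set.mem_ofPred_eq]; omega
  rw [← irrational_φ.beattySeq_symmDiff_beattySeq_pos holderConjugate_φ] at hmem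
  rcases hmem with ⟨⟨k, hk, hkm⟩, -⟩ | ⟨⟨k, hk, hkm⟩, -⟩ <;> lift k to ℕ using hk.le
  · refine Or.inl ⟨k, by omega, ?_⟩
    simp only [beattySeq, Int.cast_natCast] at hkm
    rw [← a] at hkm
    have := natCast_aNat k
    omega
  · refine Or.inr ⟨k, by omega, ?_⟩
    simp only [beattySeq, Int.cast_natCast, mul_add, mul_one] at hkm
    rw [Int.floor_add_natCast, ← a] at hkm
    have := natCast_bNat k
    omega

/-- The claimed formula for `d_{2,k}`, with `H = 2 ^ (n - 2)`. -/
noncomputable def secondColumn (H : ℤ) (k : ℕ) : ℤ := a k + (2 * H - 2) * k - (H - 1)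

lemma secondColumn_lt_succ {H : ℤ} (hH : 1 ≤ H) (k : ℕ) :
    secondColumn H k < secondColumn H (k + 1) := by
  have := a_lt_a_succ k
  rw [secondColumn, secondColumn]
  push_cast
  nlinarith

section secondColumn

variable (H : ℤ)

lemma secondColumn_aNat {k : ℕ} (hk : 1 ≤ k) :
    secondColumn H (aNat k) = (2 * H - 1) * a k + k - H := by
  rw [secondColumn, a_aNat hk, natCast_aNat]
  ring

lemma secondColumn_bNat {k : ℕ} (hk : 1 ≤ k) :
    secondColumn H (bNat k) = (2 * H - 1) * a (aNat k) + aNat k + H := by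
  rw [secondColumn, a_bNat hk, natCast_bNat, a_aNat hk, natCast_aNat]
  ring

lemma secondColumn_aNat_bNat_add_one {k : ℕ} (hk : 1 ≤ k) :
    secondColumn H (aNat (bNat k + 1)) = (2 * H - 1) * a (bNat k) + bNat k + H := by
  rw [secondColumn_aNat H (by omega), a_bNat_add_one hk, a_bNat hk]
  push_cast [natCast_bNat]
  ring

lemma setOf_secondColumn :
    {x | ∃ k : ℕ, 1 ≤ k ∧ x = secondColumn H k} =
      {x | ∃ k : ℕ, 1 ≤ k ∧ x = (2 * H - 1) * a k + k - H} ∪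
        {x | ∃ k : ℕ, 1 ≤ k ∧ x = (2 * H - 1) * a k + k + H} := by
  ext x
  simp only [Set.mem_union, Set.mem_ofPred_eq]
  constructor
  · rintro ⟨k, hk, rfl⟩
    rcases eq_aNat_or_eq_bNat hk with ⟨j, hj, rfl⟩ | ⟨j, hj, rfl⟩
    · exact Or.inl ⟨j, hj, secondColumn_aNat H hj⟩
    · exact Or.inr ⟨aNat j, one_le_aNat hj, secondColumn_bNat H hj⟩
  · rintro (⟨j, hj, rfl⟩ | ⟨j, hj, rfl⟩)
    · exact ⟨aNat j, one_le_aNat hj, (secondColumn_aNat H hj).symm⟩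
    rcases eq_aNat_or_eq_bNat hj with ⟨i, hi, rfl⟩ | ⟨i, hi, rfl⟩
    · exact ⟨bNat i, by rw [bNat]; omega, (secondColumn_bNat H hi).symm⟩
    · exact ⟨aNat (bNat i + 1), one_le_aNat (by omega),
        (secondColumn_aNat_bNat_add_one H hi).symm⟩

end secondColumn

lemma setOf_exists_one_le_eq {α : Type*} (f : ℕ → α) :
    {x | ∃ k : ℕ, 1 ≤ k ∧ x = f k} = Set.range (fun k => f (k + 1)) := by
  ext x
  constructor
  · rintro ⟨k, hk, rfl⟩
    exact ⟨k - 1, congrArg f (Nat.sub_add_cancel hk)⟩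
  · rintro ⟨k, rfl⟩
    exact ⟨k + 1, by omega, rfl⟩

lemma eq_of_lt_succ_of_setOf_eq {α : Type*} [Preorder α] {f g : ℕ → α}
    (hf : ∀ k, 1 ≤ k → f k < f (k + 1)) (hg : ∀ k, 1 ≤ k → g k < g (k + 1))
    (h : {x | ∃ k : ℕ, 1 ≤ k ∧ x = f k} = {x | ∃ k : ℕ, 1 ≤ k ∧ x = g k}) :
    ∀ k, 1 ≤ k → f k = g k := by
  have hf' : StrictMono fun k => f (k + 1) := strictMono_nat_of_lt_succ fun k => hf _ le_add_self
  have hg' : StrictMono fun k => g (k + 1) := strictMono_nat_of_lt_succ fun k => hg _ le_add_self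
  rw [setOf_exists_one_le_eq, setOf_exists_one_le_eq, hf'.range_inj hg'] at h
  intro k hk
  obtain ⟨j, rfl⟩ : ∃ j, k = j + 1 := ⟨k - 1, by omega⟩
  exact congrFun h j

theorem second_column_formula (n : ℕ) (hn : 2 ≤ n) (f : ℕ → ℤ)
    (hmono : ∀ k, 1 ≤ k → f k < f (k+1))
    (hrange : {x | ∃ k : ℕ, 1 ≤ k ∧ x = f k} = D2 n) :
    ∀ k, 1 ≤ k → f k = a k + ((2:ℤ) ^ (n-1) - 2) * k - ((2:ℤ) ^ (n-2) - 1) := by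
  obtain ⟨m, rfl⟩ : ∃ m, n = m + 2 := ⟨n - 2, by omega⟩
  have hpow : (2 : ℤ) ^ (m + 2 - 1) = 2 * 2 ^ m := by
    rw [show m + 2 - 1 = m + 1 by omega, pow_succ']
  have hpow' : (2 : ℤ) ^ (m + 2 - 2) = 2 ^ m := by rw [Nat.add_sub_cancel]
  have hD : D2 (m + 2) = {x | ∃ k : ℕ, 1 ≤ k ∧ x = secondColumn (2 ^ m) k} := by
    rw [setOf_secondColumn, D2, hpow, hpow']
  intro k hk
  rw [eq_of_lt_succ_of_setOf_eq hmono (fun k _ => secondColumn_lt_succ (one_le_pow₀ one_le_two) k)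
    (hrange.trans hD) k hk, secondColumn, hpow, hpow']
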